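/- arXiv:0711.0042 — 3 statements merged into one kernel-verified Lean document; each statement's English description precedes it below -/
import Mathlib

section
/- Let d ≥ 1, R ≥ 1, A₀ ∈ ℝ, and δ > 0. There exists λ ≥ 1, depending only on R and δ, such that for all (t,x) ∈ E_R and all real numbers Y⁰ and Z, setting h = (|x| − 1/2)² − t², one has λ·[(2|x| − 1)Z − 2tY⁰]² + h^{−1}A₀|x|^{−1}(Y⁰)² − h^{−1}|x|^{−1}Z² ≥ (Y⁰)²·h^{−1}|x|^{−1}·(A₀ − t²/(|x| − 1/2)² − δ). -/
set_option maxHeartbeats 800000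

private lemma carleman_aux_eq (lam h r a t A₀ δ Y0 Z W : ℝ)
    (hh : h ≠ 0) (hr : r ≠ 0) (ha : a ≠ 0) :
    (lam * W ^ 2 + h⁻¹ * A₀ * r⁻¹ * Y0 ^ 2 - h⁻¹ * r⁻¹ * Z ^ 2
        - Y0 ^ 2 * h⁻¹ * r⁻¹ * (A₀ - t ^ 2 / a ^ 2 - δ)) * (h * r * a ^ 2)
      = lam * W ^ 2 * (h * r * a ^ 2) - Z ^ 2 * a ^ 2 + Y0 ^ 2 * t ^ 2
        + δ * Y0 ^ 2 * a ^ 2 := by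
  field_simp
  ring

/-- Lemma 4.3 (key algebraic inequality for the Minkowski Carleman estimate):
for `R ≥ 1` and `δ > 0` there is `λ ≥ 1` (depending only on `R` and `δ`) such
that for every `A₀ ∈ ℝ`, every `(t,x) ∈ E_R` and all `Y⁰, Z ∈ ℝ`, with
`h = (|x|−1/2)² − t²`:
`λ[(2|x|−1)Z − 2tY⁰]² + h⁻¹A₀|x|⁻¹(Y⁰)² − h⁻¹|x|⁻¹Z²
  ≥ (Y⁰)² h⁻¹|x|⁻¹ (A₀ − t²/(|x|−1/2)² − δ)`. -/
theorem carleman_final_inequality (d : ℕ) (hd : 1 ≤ d)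
    (R : ℝ) (hR : 1 ≤ R) (δ : ℝ) (hδ : 0 < δ) :
    ∃ lam : ℝ, 1 ≤ lam ∧
      ∀ (A₀ : ℝ) (t : ℝ) (x : EuclideanSpace ℝ (Fin d)),
        ‖x‖ > |t| + 1 → (‖x‖ - 1/2) ^ 2 - t ^ 2 < R →
        ∀ Y0 Z : ℝ,
          lam * ((2 * ‖x‖ - 1) * Z - 2 * t * Y0) ^ 2
            + ((‖x‖ - 1/2) ^ 2 - t ^ 2)⁻¹ * A₀ * ‖x‖⁻¹ * Y0 ^ 2
            - ((‖x‖ - 1/2) ^ 2 - t ^ 2)⁻¹ * ‖x‖⁻¹ * Z ^ 2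
          ≥ Y0 ^ 2 * ((‖x‖ - 1/2) ^ 2 - t ^ 2)⁻¹ * ‖x‖⁻¹
              * (A₀ - t ^ 2 / (‖x‖ - 1/2) ^ 2 - δ) := by
  have hR0 : (0:ℝ) < R := by linarith
  refine ⟨4 + 16 * R ^ 2 / δ, ?_, ?_⟩
  · have h1 : 0 ≤ 16 * R ^ 2 / δ := by positivity
    linarith
  intro A₀ t x hx hxR Y0 Z
  set r := ‖x‖ with hrdef
  have ht0 : 0 ≤ |t| := abs_nonneg t
  have hta : |t| ^ 2 = t ^ 2 := sq_abs t
  have hr1 : 1 < r := by linarith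
  have hr0 : 0 < r := by linarith
  have ha0 : (0:ℝ) < r - 1/2 := by linarith
  have hh : 0 < (r - 1/2) ^ 2 - t ^ 2 := by nlinarith
  have hh4 : 1/4 < (r - 1/2) ^ 2 - t ^ 2 := by nlinarith
  have haq : 1/4 < (r - 1/2) ^ 2 := by nlinarith
  have hab : (|t| + 1/2) ^ 2 ≤ (r - 1/2) ^ 2 :=
    pow_le_pow_left₀ (by positivity) (by linarith) 2
  have htR' : |t| + 1/4 < R := by nlinarith [hab, hta, hxR]
  have htR : t ^ 2 < R ^ 2 := by nlinarith [hta, ht0]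
  set W := (2 * r - 1) * Z - 2 * t * Y0 with hW
  set h := (r - 1/2) ^ 2 - t ^ 2 with hhdef
  -- key polynomial inequality (denominators cleared)
  have key : 0 ≤ (4 + 16 * R ^ 2 / δ) * W ^ 2 * (h * r * (r - 1/2) ^ 2)
      - Z ^ 2 * (r - 1/2) ^ 2 + Y0 ^ 2 * t ^ 2 + δ * Y0 ^ 2 * (r - 1/2) ^ 2 := by
    have hlam : (0:ℝ) < 4 + 16 * R ^ 2 / δ := by positivity
    have hbig : 1/16 ≤ h * r * (r - 1/2) ^ 2 := by
      have h1 : (1:ℝ)/16 ≤ h * (r - 1/2) ^ 2 := by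
        nlinarith [mul_pos (sub_pos.2 hh4) (sub_pos.2 haq)]
      calc (1:ℝ)/16 ≤ h * (r - 1/2) ^ 2 := h1
        _ ≤ h * (r - 1/2) ^ 2 * r := le_mul_of_one_le_right (by positivity) hr1.le
        _ = h * r * (r - 1/2) ^ 2 := by ring
    have h1 : (4 + 16 * R ^ 2 / δ) * W ^ 2 * (1/16)
        ≤ (4 + 16 * R ^ 2 / δ) * W ^ 2 * (h * r * (r - 1/2) ^ 2) :=
      mul_le_mul_of_nonneg_left hbig (by positivity)
    have hZ : Z ^ 2 * (r - 1/2) ^ 2 = (W / 2 + t * Y0) ^ 2 := by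
      rw [hW]; ring
    have core : (W / 2 + t * Y0) ^ 2
        ≤ (4 + 16 * R ^ 2 / δ) * W ^ 2 * (1/16) + Y0 ^ 2 * t ^ 2
          + δ * Y0 ^ 2 * (r - 1/2) ^ 2 := by
      have hAM : t * Y0 * W ≤ R ^ 2 / δ * W ^ 2 + δ * Y0 ^ 2 / 4 := by
        have hq : δ * (t * Y0 * W) ≤ R ^ 2 * W ^ 2 + δ ^ 2 * Y0 ^ 2 / 4 := by
          nlinarith [sq_nonneg (δ * Y0 / 2 - t * W),
            mul_nonneg (sub_pos.2 htR).le (sq_nonneg W)]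
        have h2 : R ^ 2 / δ * W ^ 2 + δ * Y0 ^ 2 / 4
            = (R ^ 2 * W ^ 2 + δ ^ 2 * Y0 ^ 2 / 4) / δ := by field_simp
        rw [h2, le_div_iff₀ hδ]; linarith [hq]
      have hYa : δ * Y0 ^ 2 / 4 ≤ δ * Y0 ^ 2 * (r - 1/2) ^ 2 := by
        nlinarith [mul_nonneg hδ.le (sq_nonneg Y0)]
      have e : (4 + 16 * R ^ 2 / δ) * W ^ 2 * (1/16) + Y0 ^ 2 * t ^ 2
            + δ * Y0 ^ 2 * (r - 1/2) ^ 2 - (W / 2 + t * Y0) ^ 2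
          = R ^ 2 / δ * W ^ 2 + δ * Y0 ^ 2 * (r - 1/2) ^ 2 - t * Y0 * W := by ring
      linarith [hAM, hYa, e]
    rw [hZ]; linarith
  -- now convert back, dividing by h * r * (r-1/2)^2 > 0
  rw [ge_iff_le, ← sub_nonneg]
  have hpos : 0 < h * r * (r - 1/2) ^ 2 := by positivity
  have hmul := carleman_aux_eq (4 + 16 * R ^ 2 / δ) h r (r - 1/2) t A₀ δ Y0 Z W
    (ne_of_gt hh) (ne_of_gt hr0) (ne_of_gt ha0)
  refine le_of_mul_le_mul_right ?_ hpos
  rw [zero_mul, hmul]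
  exact key
end

section
/- Let d ≥ 1, h(t,x) = (|x| − 1/2)² − t², and let w' be any real-valued function on {(t,x) : x ≠ 0, h(t,x) > 0}. Denote by ∇^α h the Minkowski-raised gradient (∇^0 h = −∂_t h, ∇^i h = ∂_{x_i} h) and by H_{αβ} = ∂_α∂_β h the Hessian. Then at every point with x ≠ 0 and h > 0 one has Σ_{α,β} ∇^α h·∇^β h·( h^{−2}·∂_α h·∂_β h − h^{−1}·H_{αβ} ) − w'·Σ_α ∇^α h·∂_α h = 8 − 4h·w'. In particular, for the choice w' = h^{−1}(2 − A₀|x|^{−1}) with A₀ > 0, this quantity equals 4A₀|x|^{−1} > 0. -/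
open scoped BigOperators

/-- Coordinate directions in `ℝ × ℝ^d`: `dir 0 = ∂_t`, `dir (i+1) = ∂_{x_i}`. -/
noncomputable def coordDir (d : ℕ) : Fin (d + 1) → ℝ × EuclideanSpace ℝ (Fin d) :=
  Fin.cons ((1 : ℝ), (0 : EuclideanSpace ℝ (Fin d)))
    (fun i => ((0 : ℝ), EuclideanSpace.single i 1))

/-- Minkowski signs: `η = diag(−1,1,…,1)`. -/
def mSign (d : ℕ) : Fin (d + 1) → ℝ := Fin.cons (-1) (fun _ => 1)

/-!
With `r = |x|` one has `∂_t h = -2t` and `∂_i h = (2 - 1/r) x_i`, so the raised gradient is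
`v = (2t, (2 - 1/r) x)` and `∇^α h ∂_α h = dh(v) = (2r - 1)² - 4t² = 4h`. The Hessian is
`H(u, u') = r⁻³ ⟪x, u⟫ ⟪x, u'⟫ + (2 - 1/r) ⟪u, u'⟫ - 2 u₀ u'₀`, whence
`H(v, v) = (2 - 1/r)² (r + (2 - 1/r) r²) - 8t² = 8h`. Contracting with `∇^α h ∇^β h` therefore
turns the quantity into `h⁻² (4h)² - h⁻¹ 8h - w' 4h = 8 - 4hw'`.
-/

open scoped RealInnerProductSpace
open ContinuousLinearMap

theorem sum_sum_mul_mul_apply_apply {ι R M : Type*} [Fintype ι] [CommSemiring R]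
    [AddCommMonoid M] [Module R M] (B : M →ₗ[R] M →ₗ[R] R) (a : ι → R) (e : ι → M) :
    ∑ α, ∑ β, a α * a β * B (e α) (e β) = B (∑ α, a α • e α) (∑ α, a α • e α) := by
  simp only [map_sum, map_smul, LinearMap.sum_apply, LinearMap.smul_apply, smul_eq_mul,
    Finset.mul_sum]
  rw [Finset.sum_comm]
  exact Finset.sum_congr rfl fun _ _ => Finset.sum_congr rfl fun _ _ => by ring

theorem sum_sum_mul_mul_sub_sub_mul_sum {ι R M G : Type*} [Fintype ι] [CommRing R]
    [AddCommGroup M] [Module R M] [FunLike G M R] [LinearMapClass G R M R] (g : G)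
    (B : M →ₗ[R] M →ₗ[R] R) (a : ι → R) (e : ι → M) (c k w : R) :
    ∑ α, ∑ β, a α * a β * (c * g (e α) * g (e β) - k * B (e α) (e β))
        - w * ∑ α, a α * g (e α) =
      c * g (∑ α, a α • e α) ^ 2 - k * B (∑ α, a α • e α) (∑ α, a α • e α)
        - w * g (∑ α, a α • e α) := by
  have hB :=
    sum_sum_mul_mul_apply_apply (c • (g : M →ₗ[R] R).smulRight (g : M →ₗ[R] R) - k • B) a e
  have hg : g (∑ α, a α • e α) = ∑ α, a α * g (e α) := by simp [map_sum]
  simp only [LinearMap.sub_apply, LinearMap.smul_apply, LinearMap.smulRight_apply,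
    LinearMap.coe_coe, smul_eq_mul, mul_assoc] at hB ⊢
  rw [hB, hg, sq]

theorem HasFDerivAt.norm {F G : Type*} [NormedAddCommGroup F] [InnerProductSpace ℝ F]
    [NormedAddCommGroup G] [NormedSpace ℝ G] {f : G → F} {f' : G →L[ℝ] F} {x : G}
    (hf : HasFDerivAt f f' x) (h0 : f x ≠ 0) :
    HasFDerivAt (‖f ·‖) (‖f x‖⁻¹ • (innerSL ℝ (f x)).comp f') x := by
  have hr : ‖f x‖ ≠ 0 := norm_ne_zero_iff.2 h0
  convert hf.norm_sq.sqrt (pow_ne_zero 2 hr) using 1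
  · simp only [Real.sqrt_sq (norm_nonneg _)]
  · ext v
    simp only [smul_apply, comp_apply, coe_innerSL_apply, smul_eq_mul,
      Real.sqrt_sq (norm_nonneg _), one_div, mul_inv_rev, nsmul_eq_mul, Nat.cast_ofNat]
    field_simp

section ConeWeight

variable {F : Type*} [NormedAddCommGroup F] [InnerProductSpace ℝ F]

noncomputable def coneWeight (p : ℝ × F) : ℝ := (‖p.2‖ - 1 / 2) ^ 2 - p.1 ^ 2

noncomputable def coneWeightDeriv (p : ℝ × F) : ℝ × F →L[ℝ] ℝ :=
  (2 - ‖p.2‖⁻¹) • (innerSL ℝ p.2).comp (snd ℝ ℝ F) - (2 * p.1) • fst ℝ ℝ F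

noncomputable def coneWeightHessian (p : ℝ × F) : ℝ × F →ₗ[ℝ] ℝ × F →ₗ[ℝ] ℝ :=
  LinearMap.mk₂ ℝ (fun u v =>
      (‖p.2‖ ^ 3)⁻¹ * ⟪p.2, u.2⟫ * ⟪p.2, v.2⟫ + (2 - ‖p.2‖⁻¹) * ⟪u.2, v.2⟫ - 2 * u.1 * v.1)
    (fun u u' v => by
      simp only [Prod.fst_add, Prod.snd_add, inner_add_right, inner_add_left]
      ring)
    (fun c u v => by
      simp only [Prod.smul_fst, Prod.smul_snd, real_inner_smul_right, real_inner_smul_left,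
        smul_eq_mul]
      ring)
    (fun u v v' => by simp only [Prod.fst_add, Prod.snd_add, inner_add_right]; ring)
    (fun c u v => by
      simp only [Prod.smul_fst, Prod.smul_snd, real_inner_smul_right, smul_eq_mul]
      ring)

/-- The Minkowski-raised gradient `(∇^α h)_α` of `coneWeight`. -/
noncomputable def coneWeightGrad (p : ℝ × F) : ℝ × F := (2 * p.1, (2 - ‖p.2‖⁻¹) • p.2)

theorem coneWeightDeriv_apply (p v : ℝ × F) :
    coneWeightDeriv p v = (2 - ‖p.2‖⁻¹) * ⟪p.2, v.2⟫ - 2 * p.1 * v.1 := by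
  simp [coneWeightDeriv, mul_assoc]

theorem coneWeightHessian_apply (p u v : ℝ × F) :
    coneWeightHessian p u v =
      (‖p.2‖ ^ 3)⁻¹ * ⟪p.2, u.2⟫ * ⟪p.2, v.2⟫ + (2 - ‖p.2‖⁻¹) * ⟪u.2, v.2⟫ - 2 * u.1 * v.1 :=
  rfl

theorem hasFDerivAt_coneWeight {p : ℝ × F} (hp : p.2 ≠ 0) :
    HasFDerivAt coneWeight (coneWeightDeriv p) p := by
  have hr : ‖p.2‖ ≠ 0 := norm_ne_zero_iff.2 hp
  refine (((hasFDerivAt_snd.norm hp).sub_const (1 / 2)).pow 2 |>.sub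
    (hasFDerivAt_fst.pow 2)).congr_fderiv ?_
  ext v
  · simp [coneWeightDeriv]
  · simp only [one_div, Nat.add_one_sub_one, pow_one, nsmul_eq_mul, Nat.cast_ofNat, sub_comp,
      smul_comp, fst_comp_inr, smul_zero, sub_zero, smul_apply, comp_apply, inr_apply, coe_snd',
      coe_innerSL_apply, smul_eq_mul, coneWeightDeriv]
    field_simp

theorem fderiv_coneWeight {p : ℝ × F} (hp : p.2 ≠ 0) :
    fderiv ℝ coneWeight p = coneWeightDeriv p :=
  (hasFDerivAt_coneWeight hp).fderiv

theorem fderiv_coneWeightDeriv_apply {p : ℝ × F} (hp : p.2 ≠ 0) (u v : ℝ × F) :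
    fderiv ℝ (fun q => coneWeightDeriv q v) p u = coneWeightHessian p u v := by
  have hr : ‖p.2‖ ≠ 0 := norm_ne_zero_iff.2 hp
  have hA :=
    (hasDerivAt_inv hr).comp_hasFDerivAt p ((hasFDerivAt_snd (𝕜 := ℝ) (p := p)).norm hp)
  have hB := (hasFDerivAt_snd (p := p)).inner ℝ (hasFDerivAt_const v.2 p)
  have hC := (hasFDerivAt_fst (𝕜 := ℝ) (p := p)).mul_const (2 * v.1)
  have hD : HasFDerivAt (fun q => coneWeightDeriv q v) _ p :=
    ((((hasFDerivAt_const 2 p).sub hA).mul hB).sub hC).congr_of_eventuallyEq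
      (.of_forall fun q => by
        simp only [coneWeightDeriv_apply, Pi.sub_apply, Pi.mul_apply, Function.comp_apply]
        ring)
  rw [hD.fderiv]
  simp only [Pi.sub_apply, Function.comp_apply, neg_smul, sub_neg_eq_add, zero_add, sub_apply,
    add_apply, smul_apply, comp_apply, ContinuousLinearMap.prod_apply, coe_snd', zero_apply,
    fderivInnerCLM_apply, inner_zero_right, smul_eq_mul, coe_innerSL_apply, coe_fst',
    coneWeightHessian_apply]
  field_simp
  ring

theorem fderiv_fderiv_coneWeight_apply {p : ℝ × F} (hp : p.2 ≠ 0) (u v : ℝ × F) :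
    fderiv ℝ (fun q => fderiv ℝ coneWeight q v) p u = coneWeightHessian p u v := by
  have hU : {q : ℝ × F | q.2 ≠ 0} ∈ nhds p :=
    (isOpen_compl_singleton.preimage continuous_snd).mem_nhds hp
  have hD : (fun q => fderiv ℝ coneWeight q v) =ᶠ[nhds p] fun q => coneWeightDeriv q v :=
    Filter.mem_of_superset hU fun q hq => DFunLike.congr_fun (fderiv_coneWeight hq) v
  rw [hD.fderiv_eq, fderiv_coneWeightDeriv_apply hp]

theorem coneWeightDeriv_coneWeightGrad {p : ℝ × F} (hp : p.2 ≠ 0) :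
    coneWeightDeriv p (coneWeightGrad p) = 4 * coneWeight p := by
  have hr : ‖p.2‖ ≠ 0 := norm_ne_zero_iff.2 hp
  simp only [coneWeightDeriv_apply, coneWeightGrad, coneWeight, real_inner_smul_right,
    real_inner_self_eq_norm_sq]
  field_simp
  ring

theorem coneWeightHessian_coneWeightGrad {p : ℝ × F} (hp : p.2 ≠ 0) :
    coneWeightHessian p (coneWeightGrad p) (coneWeightGrad p) = 8 * coneWeight p := by
  have hr : ‖p.2‖ ≠ 0 := norm_ne_zero_iff.2 hp
  simp only [coneWeightHessian_apply, coneWeightGrad, coneWeight, real_inner_smul_right,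
    real_inner_smul_left]
  rw [real_inner_self_eq_norm_sq]
  field_simp
  ring

end ConeWeight

section Minkowski

variable {d : ℕ}

/-- `Σ_{α,β} ∇^α h ∇^β h (h⁻² ∂_α h ∂_β h - h⁻¹ ∂_α ∂_β h) - w Σ_α ∇^α h ∂_α h` at `p`. -/
noncomputable def pseudoconvexityQuantity (h : ℝ × EuclideanSpace ℝ (Fin d) → ℝ) (w : ℝ)
    (p : ℝ × EuclideanSpace ℝ (Fin d)) : ℝ :=
  (∑ α : Fin (d + 1), ∑ β : Fin (d + 1),
      (mSign d α * fderiv ℝ h p (coordDir d α))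
        * (mSign d β * fderiv ℝ h p (coordDir d β))
        * ((h p)⁻¹ ^ 2 * fderiv ℝ h p (coordDir d α) * fderiv ℝ h p (coordDir d β)
          - (h p)⁻¹ * fderiv ℝ (fun q => fderiv ℝ h q (coordDir d β)) p (coordDir d α)))
    - w * ∑ α : Fin (d + 1),
        (mSign d α * fderiv ℝ h p (coordDir d α)) * fderiv ℝ h p (coordDir d α)

theorem sum_mSign_mul_coneWeightDeriv_smul_coordDir (p : ℝ × EuclideanSpace ℝ (Fin d)) :
    ∑ α, (mSign d α * coneWeightDeriv p (coordDir d α)) • coordDir d α = coneWeightGrad p := by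
  simp only [Fin.sum_univ_succ, mSign, coordDir, Fin.cons_zero, Fin.cons_succ,
    coneWeightDeriv_apply]
  have hx : ∑ i, p.2 i • EuclideanSpace.single i (1 : ℝ) = p.2 := by
    simpa using (EuclideanSpace.basisFun (Fin d) ℝ).sum_repr p.2
  refine Prod.ext ?_ ?_
  · simp [Prod.fst_sum, coneWeightGrad]
  · simp [Prod.snd_sum, EuclideanSpace.inner_single_right, mul_smul, ← Finset.smul_sum, hx,
      coneWeightGrad]

theorem pseudoconvexityQuantity_coneWeight {p : ℝ × EuclideanSpace ℝ (Fin d)} (hp : p.2 ≠ 0)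
    (h0 : coneWeight p ≠ 0) (w : ℝ) :
    pseudoconvexityQuantity coneWeight w p = 8 - 4 * coneWeight p * w := by
  simp only [pseudoconvexityQuantity, fderiv_fderiv_coneWeight_apply hp, fderiv_coneWeight hp]
  rw [sum_sum_mul_mul_sub_sub_mul_sum, sum_mSign_mul_coneWeightDeriv_smul_coordDir,
    coneWeightDeriv_coneWeightGrad hp, coneWeightHessian_coneWeightGrad hp]
  field_simp
  ring

end Minkowski

theorem pseudoconvexity_weight_identity_general (d : ℕ)
    (h : ℝ × EuclideanSpace ℝ (Fin d) → ℝ)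
    (hdef : ∀ p : ℝ × EuclideanSpace ℝ (Fin d), h p = (‖p.2‖ - 1/2) ^ 2 - p.1 ^ 2)
    (w' : ℝ × EuclideanSpace ℝ (Fin d) → ℝ) :
    (∀ p : ℝ × EuclideanSpace ℝ (Fin d), p.2 ≠ 0 → 0 < h p →
      (∑ α : Fin (d + 1), ∑ β : Fin (d + 1),
          (mSign d α * fderiv ℝ h p (coordDir d α))
            * (mSign d β * fderiv ℝ h p (coordDir d β))
            * ((h p)⁻¹ ^ 2 * fderiv ℝ h p (coordDir d α) * fderiv ℝ h p (coordDir d β)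
              - (h p)⁻¹ * fderiv ℝ (fun q => fderiv ℝ h q (coordDir d β)) p (coordDir d α)))
        - w' p * ∑ α : Fin (d + 1),
            (mSign d α * fderiv ℝ h p (coordDir d α)) * fderiv ℝ h p (coordDir d α)
      = 8 - 4 * h p * w' p)
    ∧
    (∀ A₀ : ℝ, 0 < A₀ →
      (∀ p : ℝ × EuclideanSpace ℝ (Fin d), p.2 ≠ 0 → 0 < h p →
        w' p = (h p)⁻¹ * (2 - A₀ * ‖p.2‖⁻¹)) →
      ∀ p : ℝ × EuclideanSpace ℝ (Fin d), p.2 ≠ 0 → 0 < h p →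
        (∑ α : Fin (d + 1), ∑ β : Fin (d + 1),
            (mSign d α * fderiv ℝ h p (coordDir d α))
              * (mSign d β * fderiv ℝ h p (coordDir d β))
              * ((h p)⁻¹ ^ 2 * fderiv ℝ h p (coordDir d α) * fderiv ℝ h p (coordDir d β)
                - (h p)⁻¹ * fderiv ℝ (fun q => fderiv ℝ h q (coordDir d β)) p (coordDir d α)))
          - w' p * ∑ α : Fin (d + 1),
              (mSign d α * fderiv ℝ h p (coordDir d α)) * fderiv ℝ h p (coordDir d α)
        = 4 * A₀ * ‖p.2‖⁻¹ ∧ 0 < 4 * A₀ * ‖p.2‖⁻¹) := by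
  obtain rfl : h = coneWeight := funext hdef
  refine ⟨fun p hp hpos => pseudoconvexityQuantity_coneWeight hp hpos.ne' (w' p),
    fun A₀ hA₀ hw p hp hpos => ⟨?_, by have := norm_pos_iff.2 hp; positivity⟩⟩
  change pseudoconvexityQuantity coneWeight (w' p) p = _
  rw [pseudoconvexityQuantity_coneWeight hp hpos.ne', hw p hp hpos]
  field_simp
  ring

/-- For `h(t,x) = (|x|−1/2)² − t²` and any function `w'` on `{x ≠ 0, h > 0}`:
`Σ_{α,β} ∇^αh ∇^βh (h⁻² ∂_αh ∂_βh − h⁻¹ H_{αβ}) − w' Σ_α ∇^αh ∂_αh = 8 − 4hw'`,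
and for `w' = h⁻¹(2 − A₀|x|⁻¹)` with `A₀ > 0` this quantity equals
`4A₀|x|⁻¹ > 0`. -/
theorem pseudoconvexity_weight_identity (d : ℕ) (hd : 1 ≤ d)
    (h : ℝ × EuclideanSpace ℝ (Fin d) → ℝ)
    (hdef : ∀ p : ℝ × EuclideanSpace ℝ (Fin d), h p = (‖p.2‖ - 1/2) ^ 2 - p.1 ^ 2)
    (w' : ℝ × EuclideanSpace ℝ (Fin d) → ℝ) :
    (∀ p : ℝ × EuclideanSpace ℝ (Fin d), p.2 ≠ 0 → 0 < h p →
      (∑ α : Fin (d + 1), ∑ β : Fin (d + 1),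
          (mSign d α * fderiv ℝ h p (coordDir d α))
            * (mSign d β * fderiv ℝ h p (coordDir d β))
            * ((h p)⁻¹ ^ 2 * fderiv ℝ h p (coordDir d α) * fderiv ℝ h p (coordDir d β)
              - (h p)⁻¹ * fderiv ℝ (fun q => fderiv ℝ h q (coordDir d β)) p (coordDir d α)))
        - w' p * ∑ α : Fin (d + 1),
            (mSign d α * fderiv ℝ h p (coordDir d α)) * fderiv ℝ h p (coordDir d α)
      = 8 - 4 * h p * w' p)
    ∧
    (∀ A₀ : ℝ, 0 < A₀ →
      (∀ p : ℝ × EuclideanSpace ℝ (Fin d), p.2 ≠ 0 → 0 < h p →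
        w' p = (h p)⁻¹ * (2 - A₀ * ‖p.2‖⁻¹)) →
      ∀ p : ℝ × EuclideanSpace ℝ (Fin d), p.2 ≠ 0 → 0 < h p →
        (∑ α : Fin (d + 1), ∑ β : Fin (d + 1),
            (mSign d α * fderiv ℝ h p (coordDir d α))
              * (mSign d β * fderiv ℝ h p (coordDir d β))
              * ((h p)⁻¹ ^ 2 * fderiv ℝ h p (coordDir d α) * fderiv ℝ h p (coordDir d β)
                - (h p)⁻¹ * fderiv ℝ (fun q => fderiv ℝ h q (coordDir d β)) p (coordDir d α)))
          - w' p * ∑ α : Fin (d + 1),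
              (mSign d α * fderiv ℝ h p (coordDir d α)) * fderiv ℝ h p (coordDir d α)
        = 4 * A₀ * ‖p.2‖⁻¹ ∧ 0 < 4 * A₀ * ‖p.2‖⁻¹) :=
  pseudoconvexity_weight_identity_general d h hdef w'
end

section
/- Let d ≥ 1 and R ≥ 1. There exist A₀ ∈ (0,1), C ≥ 1, and λ₀ ≥ 1 such that for every λ ≥ λ₀, every (t,x) ∈ E_R, and every vector (Y⁰, Y¹, …, Y^d) ∈ ℝ^{1+d}, setting h = (|x| − 1/2)² − t², |Y'|² = Σ_{i=1}^d (Y^i)², and Z = Σ_{i=1}^d Y^i x_i/|x|, one has h^{−1}A₀|x|^{−1}(Y⁰)² + h^{−1}(1 − A₀)|x|^{−1}|Y'|² − h^{−1}|x|^{−1}Z² + λ·(−2tY⁰ + (2|x| − 1)Z)² ≥ C^{−1}·((Y⁰)² + |Y'|²). -/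
open scoped BigOperators


lemma aux_hhlow (t r : ℝ) (h : |t| + 1 < r) : |t| + 1/4 ≤ (r - 1/2) ^ 2 - t ^ 2 := by
  nlinarith [sq_abs t, abs_nonneg t,
    mul_nonneg (by linarith [abs_nonneg t] : (0:ℝ) ≤ r - |t| - 1)
      (by linarith [abs_nonneg t] : (0:ℝ) ≤ r + |t|)]

lemma aux_r2R (t r R : ℝ) (h : |t| + 1 < r) (h2 : (r - 1/2) ^ 2 - t ^ 2 < R) (hR : 1 ≤ R) :
    r < 2 * R := by
  nlinarith [sq_abs t, abs_nonneg t,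
    mul_nonneg (by linarith [abs_nonneg t] : (0:ℝ) ≤ r - 1 - |t|)
      (by linarith [abs_nonneg t] : (0:ℝ) ≤ r - 1 + |t|)]

lemma aux_tR (t r R : ℝ) (h : |t| + 1 < r) (h2 : (r - 1/2) ^ 2 - t ^ 2 < R) (hR : 1 ≤ R) :
    |t| ≤ R := by
  have := aux_r2R t r R h h2 hR
  nlinarith [sq_abs t, abs_nonneg t,
    mul_nonneg (by linarith [abs_nonneg t] : (0:ℝ) ≤ r - 1 - |t|)
      (by linarith [abs_nonneg t] : (0:ℝ) ≤ r - 1 + |t|)]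

lemma aux_t2Rh (a R hh : ℝ) (h0 : 0 ≤ a) (h1 : a ≤ R) (h2 : a ≤ hh) (h3 : 0 ≤ R) :
    4 * a ^ 2 ≤ 4 * R * hh := by nlinarith

lemma aux_wcs (Rr W B : ℝ) :
    8 * Rr * (W + 2 * B) ^ 2 ≤ 8 * Rr * (1 + 8 * Rr) * W ^ 2 + (8 * Rr + 1) * (4 * B ^ 2) := by
  nlinarith [sq_nonneg (8 * Rr * W - 2 * B)]

lemma aux_c1000 (c R3 : ℝ) (hc : c * (1000 * R3) = 1) (hcpos : 0 < c) (hR3 : 1 ≤ R3) :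
    1000 * c ≤ 1 := by nlinarith

lemma aux_cve (c ve R3 : ℝ) (hc : c * (1000 * R3) = 1) (hve : 1 ≤ ve * (32 * R3))
    (hR3 : 0 < R3) : 1000 * c ≤ 32 * ve := by nlinarith

lemma aux_yc (c ve R : ℝ) (h : 1000 * c ≤ 32 * ve) (hR : 0 < R) (hc : 0 ≤ c) (hve : 0 ≤ ve) :
    48 * R * c ≤ 28 * R * ve := by nlinarith

lemma aux_w2 (c R : ℝ) (h : 1000 * c ≤ 1) (hR : 0 < R) (hc : 0 ≤ c) : 32 * R * c ≤ R := by
  nlinarith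

lemma aux_p2 (c R : ℝ) (hc : c * (1000 * R ^ 3) = 1) (hcpos : 0 ≤ c) (hR : 1 ≤ R) :
    c * (4 * R ^ 2) ≤ 1 := by
  nlinarith [mul_nonneg hcpos (show (0:ℝ) ≤ 1000 * R ^ 3 - 4 * R ^ 2 by nlinarith [sq_nonneg R])]

lemma aux_cuv (cc m R : ℝ) (p1 : 1 ≤ 2 * m * R ^ 2) (p2 : cc * (4 * R ^ 2) ≤ 1) (hR : 0 < R) :
    cc ≤ (1/2) * m := by nlinarith [mul_pos hR hR]

lemma aux_A1 (a b S Z : ℝ) (hab : a ≤ b) (hZ : Z ^ 2 ≤ S) :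
    a * (S - Z ^ 2) ≤ b * S - b * Z ^ 2 := by nlinarith

lemma aux_cancel (a g : ℝ) (ha : 0 < a) (h : 0 ≤ a * g) : 0 ≤ g := by
  by_contra h'
  push_neg at h'
  nlinarith

lemma aux_R31 (R : ℝ) (hR : 1 ≤ R) : 1 ≤ R ^ 3 := by nlinarith [sq_nonneg R, sq_nonneg (R - 1)]

lemma aux_D1 (r : ℝ) (h : 1 < r) : (1:ℝ) ≤ (2 * r - 1) ^ 2 := by nlinarith

lemma aux_D16 (r R : ℝ) (h1 : 1 < r) (h2 : r < 2 * R) (hR : 1 ≤ R) :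
    (2 * r - 1) ^ 2 ≤ 16 * R ^ 2 := by nlinarith

lemma carleman_key (R t r lam S Z Y0 : ℝ) (hR : 1 ≤ R)
    (hrt : |t| + 1 < r) (hhR : (r - 1/2) ^ 2 - t ^ 2 < R)
    (hZS : Z ^ 2 ≤ S) (hlam : 16 * R + 3 ≤ lam) :
    (1000 * R ^ 3)⁻¹ * (Y0 ^ 2 + S) ≤
      ((r - 1/2) ^ 2 - t ^ 2)⁻¹ * (1/2) * r⁻¹ * Y0 ^ 2
        + ((r - 1/2) ^ 2 - t ^ 2)⁻¹ * (1 - 1/2) * r⁻¹ * S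
        - ((r - 1/2) ^ 2 - t ^ 2)⁻¹ * r⁻¹ * Z ^ 2
        + lam * (-(2 * t * Y0) + (2 * r - 1) * Z) ^ 2 := by
  have habs : 0 ≤ |t| := abs_nonneg t
  have hteq : t ^ 2 = |t| ^ 2 := (sq_abs t).symm
  have hhlow0 := aux_hhlow t r hrt
  set h : ℝ := (r - 1/2) ^ 2 - t ^ 2 with hhdef
  clear_value h
  have hhlow : |t| + 1/4 ≤ h := hhlow0
  have hr1 : 1 < r := by linarith
  have hrpos : 0 < r := by linarith
  have hRpos : (0:ℝ) < R := by linarith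
  have h0 : 0 < h := by linarith
  have hq : 1/4 ≤ h := by linarith
  have hth : |t| ≤ h := by linarith
  have hr2R : r < 2 * R := aux_r2R t r R hrt (by linarith) hR
  have htR : |t| ≤ R := aux_tR t r R hrt (by linarith) hR
  have ht2Rh : 4 * t ^ 2 ≤ 4 * R * h := by
    have := aux_t2Rh |t| R h habs htR hth (by linarith)
    linarith [hteq, this]
  set u : ℝ := h⁻¹ with hudef
  clear_value u
  set v : ℝ := r⁻¹ with hvdef
  clear_value v
  have hDpos : (0:ℝ) < (2 * r - 1) ^ 2 := pow_pos (by linarith) 2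
  set e : ℝ := ((2 * r - 1) ^ 2)⁻¹ with hedef
  clear_value e
  have hR3 : (0:ℝ) < R ^ 3 := by positivity
  have hCpos : (0:ℝ) < 1000 * R ^ 3 := by positivity
  set c : ℝ := (1000 * R ^ 3)⁻¹ with hcdef
  clear_value c
  have hupos : 0 < u := hudef ▸ inv_pos.mpr h0
  have hvpos : 0 < v := hvdef ▸ inv_pos.mpr hrpos
  have hepos : 0 < e := hedef ▸ inv_pos.mpr hDpos
  have hcpos : 0 < c := hcdef ▸ inv_pos.mpr hCpos
  have hu : u * h = 1 := by rw [hudef]; exact inv_mul_cancel₀ h0.ne'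
  have hv : v * r = 1 := by rw [hvdef]; exact inv_mul_cancel₀ hrpos.ne'
  have he : e * (2 * r - 1) ^ 2 = 1 := by rw [hedef]; exact inv_mul_cancel₀ hDpos.ne'
  have hc : c * (1000 * R ^ 3) = 1 := by rw [hcdef]; exact inv_mul_cancel₀ hCpos.ne'
  have hu4 : u ≤ 4 := by
    rw [hudef]
    have := inv_anti₀ (show (0:ℝ) < 1/4 by norm_num) hq
    norm_num at this
    exact this
  have hv1 : v ≤ 1 := by rw [hvdef]; exact inv_le_one_of_one_le₀ hr1.le
  have hD1 := aux_D1 r hr1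
  have he1 : e ≤ 1 := by rw [hedef]; exact inv_le_one_of_one_le₀ hD1
  have huR : 1 ≤ u * R := by
    have h1 : R⁻¹ ≤ u := hudef ▸ inv_anti₀ h0 (by linarith)
    calc (1:ℝ) = R⁻¹ * R := (inv_mul_cancel₀ hRpos.ne').symm
      _ ≤ u * R := mul_le_mul_of_nonneg_right h1 hRpos.le
  have hv2R : 1 ≤ v * (2 * R) := by
    have h1 : (2 * R)⁻¹ ≤ v := hvdef ▸ inv_anti₀ hrpos hr2R.le
    calc (1:ℝ) = (2 * R)⁻¹ * (2 * R) := (inv_mul_cancel₀ (by linarith)).symm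
      _ ≤ v * (2 * R) := mul_le_mul_of_nonneg_right h1 (by linarith)
  have hD16 := aux_D16 r R hr1 hr2R hR
  have heR : 1 ≤ e * (16 * R ^ 2) := by
    have h1 : (16 * R ^ 2)⁻¹ ≤ e := hedef ▸ inv_anti₀ hDpos hD16
    calc (1:ℝ) = (16 * R ^ 2)⁻¹ * (16 * R ^ 2) := (inv_mul_cancel₀ (by positivity)).symm
      _ ≤ e * (16 * R ^ 2) := mul_le_mul_of_nonneg_right h1 (by positivity)
  have hR31 := aux_R31 R hR
  have hc1000 : 1000 * c ≤ 1 := aux_c1000 c (R ^ 3) (by linarith [hc]) hcpos hR31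
  set W : ℝ := -(2 * t * Y0) + (2 * r - 1) * Z with hW
  clear_value W
  have hWd : (2 * r - 1) * Z = W + 2 * t * Y0 := by rw [hW]; ring
  have hsq : (2 * r - 1) ^ 2 * Z ^ 2 = (W + 2 * t * Y0) ^ 2 := by
    rw [← hWd]; ring
  have hDh : (2 * r - 1) ^ 2 - 4 * t ^ 2 = 4 * h := by rw [hhdef]; ring
  -- weighted Cauchy-Schwarz step
  have hZ2 : 8 * R * Z ^ 2
      ≤ e * (8 * R * (1 + 8 * R) * W ^ 2 + (8 * R + 1) * (4 * t ^ 2 * Y0 ^ 2)) := by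
    have h1 : 8 * R * ((2 * r - 1) ^ 2 * Z ^ 2)
        ≤ 8 * R * (1 + 8 * R) * W ^ 2 + (8 * R + 1) * (4 * t ^ 2 * Y0 ^ 2) := by
      have hsq8 : 8 * R * ((2 * r - 1) ^ 2 * Z ^ 2) = 8 * R * (W + 2 * (t * Y0)) ^ 2 := by
        rw [hsq]; ring
      have := aux_wcs R W (t * Y0)
      linarith [hsq8, this]
    have h2 := mul_le_mul_of_nonneg_left h1 hepos.le
    have h3 : e * (8 * R * ((2 * r - 1) ^ 2 * Z ^ 2)) = 8 * R * Z ^ 2 := by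
      linear_combination (8 * R * Z ^ 2) * he
    linarith [h2, h3]
  have huvD : u * v * e * (2 * r - 1) ^ 2 = u * v := by
    linear_combination (u * v) * he
  have hve : 1 ≤ (v * e) * (32 * R ^ 3) := by
    have h1 := mul_le_mul hv2R heR (by norm_num) (by positivity)
    have h2 : (v * (2 * R)) * (e * (16 * R ^ 2)) = (v * e) * (32 * R ^ 3) := by ring
    linarith [h1, h2]
  have hcve : 1000 * c ≤ 32 * (v * e) :=
    aux_cve c (v * e) (R ^ 3) (by linarith [hc]) hve hR3
  have yc : 48 * R * c ≤ 28 * R * (v * e) :=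
    aux_yc c (v * e) R hcve hRpos hcpos.le (mul_nonneg hvpos.le hepos.le)
  have yc2 : 48 * R * c ≤ (u * v * e) * (32 * R * h - 4 * t ^ 2) := by
    have s3 : (u * v * e) * (28 * R * h) = 28 * R * (v * e) := by
      linear_combination (28 * R * (v * e)) * hu
    have s2 : (u * v * e) * (28 * R * h) ≤ (u * v * e) * (32 * R * h - 4 * t ^ 2) := by
      apply mul_le_mul_of_nonneg_left _ (by positivity : (0:ℝ) ≤ u * v * e)
      linarith [ht2Rh]
    linarith [yc, s3, s2]
  have F1 : 8 * R * (u * v) * Z ^ 2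
      ≤ 8 * R * (1 + 8 * R) * (u * v * e) * W ^ 2
        + 4 * (8 * R + 1) * (u * v * e) * (t ^ 2 * Y0 ^ 2) := by
    have h2 := mul_le_mul_of_nonneg_left hZ2 (mul_pos hupos hvpos).le
    linarith [h2]
  have F2 : 8 * R * (u * v) * Y0 ^ 2 = 8 * R * ((u * v * e) * (2 * r - 1) ^ 2) * Y0 ^ 2 := by
    linear_combination (-(8 * R * Y0 ^ 2)) * huvD
  have F3 : 8 * R * ((u * v * e) * (2 * r - 1) ^ 2) * Y0 ^ 2
        - 4 * (8 * R + 1) * (u * v * e) * (t ^ 2 * Y0 ^ 2)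
      = (u * v * e) * (32 * R * h - 4 * t ^ 2) * Y0 ^ 2 := by
    linear_combination (8 * R * (u * v * e) * Y0 ^ 2) * hDh
  have F4 : 48 * R * c * Y0 ^ 2 ≤ (u * v * e) * (32 * R * h - 4 * t ^ 2) * Y0 ^ 2 := by
    have := mul_le_mul_of_nonneg_right yc2 (sq_nonneg Y0)
    linarith [this]
  have huv4 : u * v ≤ 4 := by
    have := mul_le_mul hu4 hv1 hvpos.le (by norm_num)
    linarith [this]
  have hm4 : u * v * e ≤ 4 := by
    have := mul_le_mul huv4 he1 hepos.le (by norm_num)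
    linarith [this]
  have wcoef : 32 * R * c + 8 * R * (1 + 8 * R) * (u * v * e) ≤ 16 * R * lam := by
    have h8R : (0:ℝ) ≤ 8 * R * (1 + 8 * R) := by positivity
    have w1 := mul_le_mul_of_nonneg_left hm4 h8R
    have w2 : 32 * R * c ≤ R := aux_w2 c R hc1000 hRpos hcpos.le
    have w3 : 16 * R * (16 * R + 3) ≤ 16 * R * lam :=
      mul_le_mul_of_nonneg_left hlam (by linarith)
    linarith [w1, w2, w3]
  have F5 : 32 * R * c * W ^ 2 + 8 * R * (1 + 8 * R) * (u * v * e) * W ^ 2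
      ≤ 16 * R * lam * W ^ 2 := by
    have := mul_le_mul_of_nonneg_right wcoef (sq_nonneg W)
    linarith [this]
  have A2' : 48 * R * c * Y0 ^ 2 + 32 * R * c * W ^ 2
      ≤ 8 * R * (u * v) * Y0 ^ 2 - 8 * R * (u * v) * Z ^ 2 + 16 * R * lam * W ^ 2 := by
    linarith [F1, F2, F3, F4, F5]
  have A2 : c * (3 * Y0 ^ 2) + c * (2 * W ^ 2)
      ≤ u * (1/2) * v * Y0 ^ 2 - u * (1/2) * v * Z ^ 2 + lam * W ^ 2 := by
    have hg : 0 ≤ (16 * R) * ((u * (1/2) * v * Y0 ^ 2 - u * (1/2) * v * Z ^ 2 + lam * W ^ 2)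
        - (c * (3 * Y0 ^ 2) + c * (2 * W ^ 2))) := by
      have expand : (16 * R) * ((u * (1/2) * v * Y0 ^ 2 - u * (1/2) * v * Z ^ 2 + lam * W ^ 2)
          - (c * (3 * Y0 ^ 2) + c * (2 * W ^ 2)))
          = (8 * R * (u * v) * Y0 ^ 2 - 8 * R * (u * v) * Z ^ 2 + 16 * R * lam * W ^ 2)
            - (48 * R * c * Y0 ^ 2 + 32 * R * c * W ^ 2) := by ring
      rw [expand]
      linarith [A2']
    have := aux_cancel (16 * R) _ (by linarith) hg
    linarith [this]
  have hcuv : c ≤ (1/2) * (u * v) := by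
    have p1 : 1 ≤ 2 * (u * v) * R ^ 2 := by
      have h1 := mul_le_mul huR hv2R (by norm_num) (by positivity)
      have h2 : (u * R) * (v * (2 * R)) = 2 * (u * v) * R ^ 2 := by ring
      linarith [h1, h2]
    have p2 : c * (4 * R ^ 2) ≤ 1 := aux_p2 c R hc hcpos.le hR
    exact aux_cuv c (u * v) R p1 p2 hRpos
  have A1 : c * (S - Z ^ 2) ≤ (1/2) * (u * v) * S - (1/2) * (u * v) * Z ^ 2 :=
    aux_A1 c ((1/2) * (u * v)) S Z hcuv hZS
  have hDhY : ((2 * r - 1) ^ 2 - 4 * t ^ 2) * Y0 ^ 2 = 4 * h * Y0 ^ 2 := by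
    linear_combination Y0 ^ 2 * hDh
  have a31 : (2 * r - 1) ^ 2 * Z ^ 2 ≤ 2 * W ^ 2 + 2 * ((2 * r - 1) ^ 2) * Y0 ^ 2 := by
    linarith [hsq, hDhY, sq_nonneg (W - 2 * t * Y0), mul_nonneg h0.le (sq_nonneg Y0)]
  have A3 : Z ^ 2 ≤ 2 * Y0 ^ 2 + 2 * W ^ 2 := by
    have h2 := mul_le_mul_of_nonneg_left a31 hepos.le
    have e1 : e * ((2 * r - 1) ^ 2 * Z ^ 2) = Z ^ 2 := by linear_combination Z ^ 2 * he
    have e2 : e * (2 * W ^ 2 + 2 * ((2 * r - 1) ^ 2) * Y0 ^ 2) = 2 * e * W ^ 2 + 2 * Y0 ^ 2 := by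
      linear_combination (2 * Y0 ^ 2) * he
    have e3 : e * W ^ 2 ≤ W ^ 2 := mul_le_of_le_one_left (sq_nonneg W) he1
    linarith [h2, e1, e2, e3]
  have cA3 : c * Z ^ 2 ≤ c * (2 * Y0 ^ 2 + 2 * W ^ 2) :=
    mul_le_mul_of_nonneg_left A3 hcpos.le
  linarith [A1, A2, cA3]

/-- Key coercivity bound in the proof of the Minkowski Carleman estimate:
for `R ≥ 1` there are `A₀ ∈ (0,1)`, `C ≥ 1`, `λ₀ ≥ 1` such that for all
`λ ≥ λ₀`, `(t,x) ∈ E_R`, and `(Y⁰, Y') ∈ ℝ^{1+d}`, with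
`h = (|x|−1/2)² − t²`, `Z = Y'·x/|x|`:
`h⁻¹A₀|x|⁻¹(Y⁰)² + h⁻¹(1−A₀)|x|⁻¹|Y'|² − h⁻¹|x|⁻¹Z²
  + λ(−2tY⁰ + (2|x|−1)Z)² ≥ C⁻¹((Y⁰)² + |Y'|²)`. -/
theorem carleman_coercivity (d : ℕ) (hd : 1 ≤ d) (R : ℝ) (hR : 1 ≤ R) :
    ∃ A₀ C lam₀ : ℝ, 0 < A₀ ∧ A₀ < 1 ∧ 1 ≤ C ∧ 1 ≤ lam₀ ∧
      ∀ lam : ℝ, lam₀ ≤ lam →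
      ∀ (t : ℝ) (x : EuclideanSpace ℝ (Fin d)),
        ‖x‖ > |t| + 1 → (‖x‖ - 1/2) ^ 2 - t ^ 2 < R →
        ∀ (Y0 : ℝ) (Y : Fin d → ℝ),
          ((‖x‖ - 1/2) ^ 2 - t ^ 2)⁻¹ * A₀ * ‖x‖⁻¹ * Y0 ^ 2
            + ((‖x‖ - 1/2) ^ 2 - t ^ 2)⁻¹ * (1 - A₀) * ‖x‖⁻¹ * (∑ i, (Y i) ^ 2)
            - ((‖x‖ - 1/2) ^ 2 - t ^ 2)⁻¹ * ‖x‖⁻¹ * (∑ i, Y i * x i / ‖x‖) ^ 2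
            + lam * (-(2 * t * Y0) + (2 * ‖x‖ - 1) * (∑ i, Y i * x i / ‖x‖)) ^ 2
          ≥ C⁻¹ * (Y0 ^ 2 + ∑ i, (Y i) ^ 2) := by
  have hR3 : (1:ℝ) ≤ R ^ 3 := by nlinarith [sq_nonneg R, sq_nonneg (R - 1)]
  refine ⟨1/2, 1000 * R ^ 3, 16 * R + 3, by norm_num, by norm_num, by linarith, by linarith, ?_⟩
  intro lam hlam t x hx hhR Y0 Y
  have hxpos : 0 < ‖x‖ := lt_of_le_of_lt (by positivity) hx
  have hxnorm : ‖x‖ ^ 2 = ∑ i, (x i) ^ 2 := by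
    rw [EuclideanSpace.norm_eq, Real.sq_sqrt (by positivity)]
    refine Finset.sum_congr rfl fun i _ => ?_
    rw [Real.norm_eq_abs, sq_abs]
  have hZS : (∑ i, Y i * x i / ‖x‖) ^ 2 ≤ ∑ i, (Y i) ^ 2 := by
    have hcs : (∑ i, Y i * x i) ^ 2 ≤ (∑ i, (Y i) ^ 2) * (∑ i, (x i) ^ 2) :=
      Finset.sum_mul_sq_le_sq_mul_sq _ _ _
    have hsum : (∑ i, Y i * x i / ‖x‖) = (∑ i, Y i * x i) / ‖x‖ := by
      rw [← Finset.sum_div]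
    rw [hsum, div_pow, div_le_iff₀ (by positivity)]
    calc (∑ i, Y i * x i) ^ 2 ≤ (∑ i, (Y i) ^ 2) * (∑ i, (x i) ^ 2) := hcs
      _ = (∑ i, (Y i) ^ 2) * ‖x‖ ^ 2 := by rw [hxnorm]
  exact carleman_key R t ‖x‖ lam (∑ i, (Y i) ^ 2) (∑ i, Y i * x i / ‖x‖) Y0 hR hx hhR hZS hlam
end
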